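/- Let X be a positive-integer valued random variable with P(X ≥ n) > 0 for all n, and suppose that for all large n, e^{-ζ} ≤ P(X ≥ n+1)/P(X ≥ n) ≤ e^{-ξ} where 0 < ξ ≤ ζ < ∞. Let u_n satisfy P(X ≥ u_n) = a_n/(2n+1)^d with a_n bounded, liminf a_n ≥ e^{-ζ}, a_n ≤ 1. Then for every fixed integer x ≥ 0: liminf_n (2n+1)^d · P(X ≥ u_n + x) ≥ e^{-ζ(x+1)} and limsup_n (2n+1)^d · P(X ≥ u_n + x) ≤ e^{-ξ x}. -/

import Mathlib

/-!
Since `P(X ≥ u n) ≤ (2n+1)^{-d} → 0` and every tail probability is positive, `u n → ∞`, so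
eventually `u n` lies in the range where the ratio bounds hold. Iterating them `x` times gives
`e^{-ζx} P(X ≥ u n) ≤ P(X ≥ u n + x) ≤ e^{-ξx} P(X ≥ u n)`, and multiplying by `(2n+1)^d`
turns `P(X ≥ u n)` into `a n`; then `liminf a ≥ e^{-ζ}` and `a ≤ 1` give the two bounds.
-/

open MeasureTheory Filter Topology

section TailSequence

variable {p : ℕ → ℝ}

lemma pow_mul_le_of_forall_mul_le_succ {c : ℝ} {N m : ℕ} (hc : 0 ≤ c)
    (h : ∀ k ≥ N, c * p k ≤ p (k + 1)) (hm : N ≤ m) (j : ℕ) :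
    c ^ j * p m ≤ p (m + j) :=
  geom_le (u := fun j => p (m + j)) hc j fun k _ => h (m + k) (by omega)

lemma le_pow_mul_of_forall_le_mul_succ {c : ℝ} {N m : ℕ} (hc : 0 ≤ c)
    (h : ∀ k ≥ N, p (k + 1) ≤ c * p k) (hm : N ≤ m) (j : ℕ) :
    p (m + j) ≤ c ^ j * p m :=
  le_geom (u := fun j => p (m + j)) hc j fun k _ => h (m + k) (by omega)

lemma tendsto_atTop_of_antitone_of_tendsto_zero (hp : Antitone p) (hpos : ∀ k, 0 < p k)
    {u : ℕ → ℕ} (h : Tendsto (fun n => p (u n)) atTop (𝓝 0)) : Tendsto u atTop atTop :=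
  tendsto_atTop.2 fun N =>
    (h.eventually (eventually_lt_nhds (hpos N))).mono fun _ hn => (hp.reflect_lt hn).le

lemma eventually_pow_mul_le_and_le_pow_mul {r s : ℝ} (hr : 0 ≤ r) (hs : 0 ≤ s)
    (hratio : ∀ᶠ k in atTop, r * p k ≤ p (k + 1) ∧ p (k + 1) ≤ s * p k)
    {u : ℕ → ℕ} (hu : Tendsto u atTop atTop) (j : ℕ) :
    ∀ᶠ n in atTop, r ^ j * p (u n) ≤ p (u n + j) ∧ p (u n + j) ≤ s ^ j * p (u n) := by
  obtain ⟨N, hN⟩ := eventually_atTop.1 hratio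
  filter_upwards [tendsto_atTop.1 hu N] with n hn
  exact ⟨pow_mul_le_of_forall_mul_le_succ hr (fun k hk => (hN k hk).1) hn j,
    le_pow_mul_of_forall_le_mul_succ hs (fun k hk => (hN k hk).2) hn j⟩

end TailSequence

lemma le_liminf_of_eventually_mul_le {ι : Type*} {l : Filter ι} [l.NeBot] {f a : ι → ℝ}
    {c L : ℝ} (hc : 0 ≤ c) (ha0 : 0 ≤ᶠ[l] a) (ha1 : IsBoundedUnder (· ≤ ·) l a)
    (hL : L ≤ liminf a l) (hf : IsBoundedUnder (· ≤ ·) l f) (h : ∀ᶠ i in l, a i * c ≤ f i) :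
    L * c ≤ liminf f l := by
  have hac : liminf a l * c ≤ liminf (fun i => a i * c) l := by
    have h := le_liminf_mul (v := fun _ => c) ha0 ha1 (Eventually.of_forall fun _ => hc)
      isBoundedUnder_const.isCoboundedUnder_ge
    rwa [liminf_const] at h
  calc L * c ≤ liminf a l * c := mul_le_mul_of_nonneg_right hL hc
    _ ≤ liminf (fun i => a i * c) l := hac
    _ ≤ liminf f l := liminf_le_liminf h
        (isBoundedUnder_of_eventually_ge (ha0.mono fun _ hi => mul_nonneg hi hc))
        hf.isCoboundedUnder_ge

theorem liminf_limsup_bounds_of_tail_ratio {p w a : ℕ → ℝ} {u : ℕ → ℕ} {r s : ℝ}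
    (hp : Antitone p) (hpos : ∀ k, 0 < p k) (hr : 0 ≤ r) (hs : 0 ≤ s)
    (hratio : ∀ᶠ k in atTop, r * p k ≤ p (k + 1) ∧ p (k + 1) ≤ s * p k)
    (hw : Tendsto w atTop atTop) (ha1 : ∀ n, a n ≤ 1) (ha2 : r ≤ liminf a atTop)
    (hu : ∀ n, p (u n) = a n / w n) (j : ℕ) :
    r ^ (j + 1) ≤ liminf (fun n => w n * p (u n + j)) atTop ∧
      limsup (fun n => w n * p (u n + j)) atTop ≤ s ^ j := by
  have hw_pos : ∀ᶠ n in atTop, 0 < w n := hw.eventually_gt_atTop 0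
  have ha_eq : ∀ᶠ n in atTop, w n * p (u n) = a n :=
    hw_pos.mono fun n hn => by rw [hu n, mul_div_cancel₀ _ hn.ne']
  have ha0 : 0 ≤ᶠ[atTop] a := by
    filter_upwards [hw_pos, ha_eq] with n hwn ha
    exact ha ▸ (mul_pos hwn (hpos _)).le
  have hpu : Tendsto (fun n => p (u n)) atTop (𝓝 0) := by
    refine squeeze_zero' (Eventually.of_forall fun n => (hpos _).le) ?_ hw.inv_tendsto_atTop
    filter_upwards [hw_pos] with n hwn
    rw [hu n, div_eq_mul_inv]
    exact mul_le_of_le_one_left (inv_nonneg.2 hwn.le) (ha1 n)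
  have hbounds : ∀ᶠ n in atTop,
      a n * r ^ j ≤ w n * p (u n + j) ∧ w n * p (u n + j) ≤ a n * s ^ j := by
    filter_upwards [eventually_pow_mul_le_and_le_pow_mul hr hs hratio
      (tendsto_atTop_of_antitone_of_tendsto_zero hp hpos hpu) j, hw_pos, ha_eq]
      with n ⟨hlow, hup⟩ hwn ha
    constructor
    · calc a n * r ^ j = w n * (r ^ j * p (u n)) := by rw [← ha]; ring
        _ ≤ w n * p (u n + j) := mul_le_mul_of_nonneg_left hlow hwn.le
    · calc w n * p (u n + j) ≤ w n * (s ^ j * p (u n)) := mul_le_mul_of_nonneg_left hup hwn.le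
        _ = a n * s ^ j := by rw [← ha]; ring
  have hupper : ∀ᶠ n in atTop, w n * p (u n + j) ≤ s ^ j :=
    hbounds.mono fun n hn => hn.2.trans (mul_le_of_le_one_left (pow_nonneg hs j) (ha1 n))
  have hnonneg : ∀ᶠ n in atTop, 0 ≤ w n * p (u n + j) :=
    hw_pos.mono fun n hn => (mul_pos hn (hpos _)).le
  constructor
  · rw [pow_succ']
    exact le_liminf_of_eventually_mul_le (pow_nonneg hr j) ha0
      (isBoundedUnder_of_eventually_le (Eventually.of_forall ha1)) ha2
      (isBoundedUnder_of_eventually_le hupper) (hbounds.mono fun _ hn => hn.1)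
  · exact limsup_le_of_le (isCoboundedUnder_le_of_eventually_le _ hnonneg) hupper

theorem stmt_5_general {Ω : Type*} [MeasurableSpace Ω] (μ : Measure Ω) [IsProbabilityMeasure μ]
    (X : Ω → ℕ)
    (hpos : ∀ n : ℕ, 0 < (μ {ω | n ≤ X ω}).toReal)
    (ζ ξ : ℝ)
    (hratio : ∀ᶠ n : ℕ in atTop,
      Real.exp (-ζ) ≤ (μ {ω | n + 1 ≤ X ω}).toReal / (μ {ω | n ≤ X ω}).toReal ∧
      (μ {ω | n + 1 ≤ X ω}).toReal / (μ {ω | n ≤ X ω}).toReal ≤ Real.exp (-ξ))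
    (d : ℕ) (hd : 1 ≤ d)
    (u : ℕ → ℕ) (a : ℕ → ℝ)
    (ha1 : ∀ n, a n ≤ 1)
    (ha2 : Real.exp (-ζ) ≤ liminf a atTop)
    (hu : ∀ n : ℕ, (μ {ω | u n ≤ X ω}).toReal = a n / (2 * n + 1 : ℝ) ^ d) :
    ∀ x : ℕ,
      Real.exp (-ζ * (x + 1)) ≤
        liminf (fun n : ℕ =>
          ((2 * n + 1 : ℝ) ^ d) * (μ {ω | u n + x ≤ X ω}).toReal) atTop ∧
      limsup (fun n : ℕ =>
          ((2 * n + 1 : ℝ) ^ d) * (μ {ω | u n + x ≤ X ω}).toReal) atTop ≤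
        Real.exp (-ξ * x) := by
  intro x
  have hanti : Antitone fun k : ℕ => (μ {ω | k ≤ X ω}).toReal := fun j k hjk =>
    ENNReal.toReal_mono (measure_ne_top μ _) (measure_mono fun ω hω => hjk.trans hω)
  have hstep := hratio.mono fun k hk =>
    And.intro ((le_div_iff₀ (hpos k)).1 hk.1) ((div_le_iff₀ (hpos k)).1 hk.2)
  have hw : Tendsto (fun n : ℕ => (2 * n + 1 : ℝ) ^ d) atTop atTop :=
    (tendsto_pow_atTop (by omega)).comp <| tendsto_atTop_add_const_right _ 1 <|
      tendsto_natCast_atTop_atTop.const_mul_atTop two_pos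
  have hexp (c : ℝ) (k : ℕ) : Real.exp (-c * k) = Real.exp (-c) ^ k := by
    rw [← Real.exp_nat_mul, mul_comm]
  obtain ⟨hlow, hup⟩ := liminf_limsup_bounds_of_tail_ratio hanti hpos (Real.exp_pos _).le
    (Real.exp_pos _).le hstep hw ha1 ha2 hu x
  exact ⟨by simpa [← hexp] using hlow, by rwa [hexp]⟩

theorem stmt_5 {Ω : Type*} [MeasurableSpace Ω] (μ : Measure Ω) [IsProbabilityMeasure μ]
    (X : Ω → ℕ) (hX : Measurable X) (hX1 : ∀ ω, 1 ≤ X ω)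
    (hpos : ∀ n : ℕ, 0 < (μ {ω | n ≤ X ω}).toReal)
    (ζ ξ : ℝ) (hξ : 0 < ξ) (hξζ : ξ ≤ ζ)
    (hratio : ∀ᶠ n : ℕ in atTop,
      Real.exp (-ζ) ≤ (μ {ω | n + 1 ≤ X ω}).toReal / (μ {ω | n ≤ X ω}).toReal ∧
      (μ {ω | n + 1 ≤ X ω}).toReal / (μ {ω | n ≤ X ω}).toReal ≤ Real.exp (-ξ))
    (d : ℕ) (hd : 1 ≤ d)
    (u : ℕ → ℕ) (a : ℕ → ℝ)
    (ha1 : ∀ n, a n ≤ 1)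
    (ha2 : Real.exp (-ζ) ≤ liminf a atTop)
    (hu : ∀ n : ℕ, (μ {ω | u n ≤ X ω}).toReal = a n / (2 * n + 1 : ℝ) ^ d) :
    ∀ x : ℕ,
      Real.exp (-ζ * (x + 1)) ≤
        liminf (fun n : ℕ =>
          ((2 * n + 1 : ℝ) ^ d) * (μ {ω | u n + x ≤ X ω}).toReal) atTop ∧
      limsup (fun n : ℕ =>
          ((2 * n + 1 : ℝ) ^ d) * (μ {ω | u n + x ≤ X ω}).toReal) atTop ≤
        Real.exp (-ξ * x) :=
  stmt_5_general μ X hpos ζ ξ hratio d hd u a ha1 ha2 hu
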